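/- arXiv:2506.19745 — 4 statements merged into one kernel-verified Lean document; each statement's English description precedes it below -/
import Mathlib

section
/- Let G be a finite group, H a subgroup of G, and let Ω = G/H be the set of left cosets of H in G, on which G acts by left multiplication. Let x_1, ..., x_k be a complete set of representatives of the conjugacy classes of G consisting of elements of prime order. Then the number of ordered pairs (α, β) ∈ Ω × Ω such that the pointwise stabiliser G_α ∩ G_β is a nontrivial subgroup is at most |Ω|^2 * Σ_{i=1}^{k} |x_i^G| * (|x_i^G ∩ H| / |x_i^G|)^2. -/
open MulAction

private lemma fix_formula {G : Type*} [Group G] [Finite G] (H : Subgroup G) (y : G) :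
    Nat.card {α : G ⧸ H // y • α = α} * Nat.card {z : G // IsConj y z} =
      Nat.card (G ⧸ H) * Nat.card {z : G // IsConj y z ∧ z ∈ H} := by
  classical
  cases nonempty_fintype G
  set C := stabilizer (ConjAct G) y with hCdef
  -- step 1 : counting the preimage in G of fixed points in G ⧸ H
  have h1 : Nat.card {g : G // y • (QuotientGroup.mk g : G ⧸ H) = QuotientGroup.mk g} =
      Nat.card H * Nat.card {α : G ⧸ H // y • α = α} := by
    rw [show {g : G // y • (QuotientGroup.mk g : G ⧸ H) = QuotientGroup.mk g} =
        ↥(QuotientGroup.mk ⁻¹' {α : G ⧸ H | y • α = α}) from rfl,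
      Nat.card_congr (QuotientGroup.preimageMkEquivSubgroupProdSet H _), Nat.card_prod]
    rfl
  -- step 2 : counting conjugators into H
  have h2 : Nat.card {g : ConjAct G // g • y ∈ H} =
      Nat.card C * Nat.card {z : G // IsConj y z ∧ z ∈ H} := by
    have e0 : {g : ConjAct G // g • y ∈ H} =
        ↥(QuotientGroup.mk ⁻¹'
          {q : ConjAct G ⧸ C | ((orbitEquivQuotientStabilizer (ConjAct G) y).symm q : G) ∈ H}) := by
      rfl
    rw [e0, Nat.card_congr (QuotientGroup.preimageMkEquivSubgroupProdSet C _), Nat.card_prod]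
    congr 1
    have e1 : {q : ConjAct G ⧸ C //
        ((orbitEquivQuotientStabilizer (ConjAct G) y).symm q : G) ∈ H} ≃
        {z : ↥(orbit (ConjAct G) y) // (z : G) ∈ H} :=
      Equiv.subtypeEquiv (orbitEquivQuotientStabilizer (ConjAct G) y).symm (fun q => Iff.rfl)
    have e2 : {z : ↥(orbit (ConjAct G) y) // (z : G) ∈ H} ≃ {z : G // IsConj y z ∧ z ∈ H} :=
      { toFun := fun z => ⟨z.1.1, (ConjAct.mem_orbit_conjAct.mp z.1.2).symm, z.2⟩
        invFun := fun z => ⟨⟨z.1, ConjAct.mem_orbit_conjAct.mpr z.2.1.symm⟩, z.2.2⟩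
        left_inv := fun z => rfl
        right_inv := fun z => rfl }
    exact Nat.card_congr (e1.trans e2)
  -- step 3 : the two sets counted in steps 1 and 2 are in bijection
  have h3 : Nat.card {g : G // y • (QuotientGroup.mk g : G ⧸ H) = QuotientGroup.mk g} =
      Nat.card {g : ConjAct G // g • y ∈ H} := by
    refine Nat.card_congr (Equiv.subtypeEquiv ((Equiv.inv G).trans ConjAct.toConjAct.toEquiv) ?_)
    intro g
    simp only [Equiv.trans_apply, Equiv.inv_apply, MulEquiv.toEquiv_eq_coe, EquivLike.coe_coe]
    rw [MulAction.Quotient.smul_mk, QuotientGroup.eq, ConjAct.smul_def,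
      ConjAct.ofConjAct_toConjAct, smul_eq_mul]
    rw [show (y * g)⁻¹ * g = (g⁻¹ * y * g)⁻¹ by group, inv_mem_iff, inv_inv]
  -- step 4 : orbit-stabilizer
  have h4 : Nat.card {z : G // IsConj y z} * Nat.card C = Nat.card G := by
    have e : Nat.card {z : G // IsConj y z} = Nat.card ↥(orbit (ConjAct G) y) :=
      Nat.card_congr (Equiv.subtypeEquivRight fun z => by
        rw [ConjAct.mem_orbit_conjAct]; exact isConj_comm)
    rw [e, ← Nat.card_prod, Nat.card_congr (orbitProdStabilizerEquivGroup (ConjAct G) y)]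
    exact Nat.card_congr ConjAct.ofConjAct.toEquiv
  -- step 5 : Lagrange
  have h5 : Nat.card G = Nat.card (G ⧸ H) * Nat.card H :=
    Subgroup.card_eq_card_quotient_mul_card_subgroup H
  have hHpos : 0 < Nat.card H := Nat.card_pos
  have hCpos : 0 < Nat.card C := Nat.card_pos
  have key : (Nat.card {α : G ⧸ H // y • α = α} * Nat.card {z : G // IsConj y z}) *
      (Nat.card H * Nat.card C) =
      (Nat.card (G ⧸ H) * Nat.card {z : G // IsConj y z ∧ z ∈ H}) *
      (Nat.card H * Nat.card C) := by
    calc (Nat.card {α : G ⧸ H // y • α = α} * Nat.card {z : G // IsConj y z}) *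
        (Nat.card H * Nat.card C)
        = (Nat.card H * Nat.card {α : G ⧸ H // y • α = α}) *
          (Nat.card {z : G // IsConj y z} * Nat.card C) := by ring
      _ = (Nat.card C * Nat.card {z : G // IsConj y z ∧ z ∈ H}) *
          (Nat.card (G ⧸ H) * Nat.card H) := by rw [← h1, h3, h2, h4, h5]
      _ = (Nat.card (G ⧸ H) * Nat.card {z : G // IsConj y z ∧ z ∈ H}) *
          (Nat.card H * Nat.card C) := by ring
  exact Nat.eq_of_mul_eq_mul_right (Nat.mul_pos hHpos hCpos) key

/-- If `x 0, ..., x (k-1)` is a complete set of representatives of the conjugacy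
classes of the finite group `G` consisting of elements of prime order, then the
number of ordered pairs `(α, β)` of left cosets of a subgroup `H` whose pointwise
stabiliser is nontrivial is at most
`|G/H|^2 * ∑ i, |x_i^G| * (|x_i^G ∩ H| / |x_i^G|)^2`. -/
theorem stmt1 {G : Type*} [Group G] [Finite G] (H : Subgroup G) (k : ℕ) (x : Fin k → G)
    (hord : ∀ i, (orderOf (x i)).Prime)
    (hdist : ∀ i j, IsConj (x i) (x j) → i = j)
    (hcomplete : ∀ g : G, (orderOf g).Prime → ∃ i, IsConj (x i) g) :
    (Nat.card {p : (G ⧸ H) × (G ⧸ H) //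
        MulAction.stabilizer G p.1 ⊓ MulAction.stabilizer G p.2 ≠ ⊥} : ℝ) ≤
      (Nat.card (G ⧸ H) : ℝ) ^ 2 *
        ∑ i : Fin k, (Nat.card {y : G // IsConj (x i) y} : ℝ) *
          ((Nat.card {y : G // IsConj (x i) y ∧ y ∈ H} : ℝ) /
            (Nat.card {y : G // IsConj (x i) y} : ℝ)) ^ 2 := by
  classical
  cases nonempty_fintype G
  -- abbreviations
  set n : Fin k → ℕ := fun i => Nat.card {y : G // IsConj (x i) y} with hn
  set m : Fin k → ℕ := fun i => Nat.card {y : G // IsConj (x i) y ∧ y ∈ H} with hm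
  have npos : ∀ i, 0 < n i := by
    intro i
    have : Nonempty {y : G // IsConj (x i) y} := ⟨⟨x i, IsConj.refl _⟩⟩
    exact Nat.card_pos
  -- key fixed-point formula for elements of the i-th class
  have key : ∀ (i : Fin k) (y : G), IsConj (x i) y →
      Nat.card {α : G ⧸ H // y • α = α} * n i = Nat.card (G ⧸ H) * m i := by
    intro i y hy
    have h := fix_formula H y
    have e1 : Nat.card {z : G // IsConj y z} = n i :=
      Nat.card_congr (Equiv.subtypeEquivRight fun z =>
        ⟨fun h => hy.trans h, fun h => hy.symm.trans h⟩)
    have e2 : Nat.card {z : G // IsConj y z ∧ z ∈ H} = m i :=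
      Nat.card_congr (Equiv.subtypeEquivRight fun z =>
        ⟨fun h => ⟨hy.trans h.1, h.2⟩, fun h => ⟨hy.symm.trans h.1, h.2⟩⟩)
    rw [e1, e2] at h
    exact h
  -- The auxiliary counting type
  set P : (Fin k × G) × ((G ⧸ H) × (G ⧸ H)) → Prop := fun t =>
    IsConj (x t.1.1) t.1.2 ∧ t.1.2 • t.2.1 = t.2.1 ∧ t.1.2 • t.2.2 = t.2.2 with hP
  -- injection of bad pairs
  have hinj : Nat.card {p : (G ⧸ H) × (G ⧸ H) //
      MulAction.stabilizer G p.1 ⊓ MulAction.stabilizer G p.2 ≠ ⊥} ≤ Nat.card {t // P t} := by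
    have hex : ∀ (p : {p : (G ⧸ H) × (G ⧸ H) //
        MulAction.stabilizer G p.1 ⊓ MulAction.stabilizer G p.2 ≠ ⊥}),
        ∃ ig : Fin k × G, P (ig, p.1) := by
      rintro ⟨⟨α, β⟩, hp⟩
      set K := MulAction.stabilizer G α ⊓ MulAction.stabilizer G β with hK
      have hcard : 1 < Nat.card K := (Subgroup.one_lt_card_iff_ne_bot _).mpr hp
      have hprime : (Nat.card K).minFac.Prime := Nat.minFac_prime (by omega)
      haveI : Fact (Nat.card K).minFac.Prime := ⟨hprime⟩
      obtain ⟨g, hg⟩ := exists_prime_orderOf_dvd_card' (G := K) (Nat.card K).minFac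
        (Nat.minFac_dvd _)
      have hgord : (orderOf (g : G)).Prime := by
        rw [Subgroup.orderOf_coe, hg]
        exact hprime
      obtain ⟨i, hi⟩ := hcomplete (g : G) hgord
      refine ⟨(i, (g : G)), hi, ?_, ?_⟩
      · exact mem_stabilizer_iff.mp (g.2.1)
      · exact mem_stabilizer_iff.mp (g.2.2)
    choose f hf using hex
    refine Nat.card_le_card_of_injective (fun p => ⟨(f p, p.1), hf p⟩) ?_
    intro a b hab
    exact Subtype.ext (congrArg (fun t => t.1.2) hab)
  -- computing the cardinality of the auxiliary type
  have E : {t // P t} ≃ Σ i : Fin k, Σ y : {y : G // IsConj (x i) y},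
      ({α : G ⧸ H // (y : G) • α = α} × {α : G ⧸ H // (y : G) • α = α}) :=
    { toFun := fun t => ⟨t.1.1.1, ⟨t.1.1.2, t.2.1⟩, ⟨t.1.2.1, t.2.2.1⟩, ⟨t.1.2.2, t.2.2.2⟩⟩
      invFun := fun s => ⟨((s.1, s.2.1.1), (s.2.2.1.1, s.2.2.2.1)), s.2.1.2, s.2.2.1.2, s.2.2.2.2⟩
      left_inv := fun t => rfl
      right_inv := fun s => rfl }
  have hcard : Nat.card {t // P t} = ∑ i : Fin k, ∑ y : {y : G // IsConj (x i) y},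
      (Nat.card {α : G ⧸ H // (y : G) • α = α}) ^ 2 := by
    rw [Nat.card_congr E, Nat.card_eq_fintype_card, Fintype.card_sigma]
    refine Finset.sum_congr rfl fun i _ => ?_
    rw [Fintype.card_sigma]
    refine Finset.sum_congr rfl fun y _ => ?_
    rw [Fintype.card_prod, Nat.card_eq_fintype_card, sq]
  -- now the real computation
  have hfixreal : ∀ (i : Fin k) (y : {y : G // IsConj (x i) y}),
      (Nat.card {α : G ⧸ H // (y : G) • α = α} : ℝ) =
        (Nat.card (G ⧸ H) : ℝ) * m i / n i := by
    intro i y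
    have h := key i y y.2
    have hne : (n i : ℝ) ≠ 0 := Nat.cast_ne_zero.mpr (npos i).ne'
    rw [eq_div_iff hne]
    exact_mod_cast h
  calc (Nat.card {p : (G ⧸ H) × (G ⧸ H) //
        MulAction.stabilizer G p.1 ⊓ MulAction.stabilizer G p.2 ≠ ⊥} : ℝ)
      ≤ (Nat.card {t // P t} : ℝ) := Nat.cast_le.mpr hinj
    _ = ∑ i : Fin k, ∑ y : {y : G // IsConj (x i) y},
        ((Nat.card {α : G ⧸ H // (y : G) • α = α} : ℝ)) ^ 2 := by
        rw [hcard]; push_cast; rfl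
    _ = ∑ i : Fin k, ∑ _y : {y : G // IsConj (x i) y},
        ((Nat.card (G ⧸ H) : ℝ) * m i / n i) ^ 2 := by
        refine Finset.sum_congr rfl fun i _ => Finset.sum_congr rfl fun y _ => ?_
        rw [hfixreal i y]
    _ = ∑ i : Fin k, (n i : ℝ) * ((Nat.card (G ⧸ H) : ℝ) * m i / n i) ^ 2 := by
        refine Finset.sum_congr rfl fun i _ => ?_
        rw [Finset.sum_const, nsmul_eq_mul]
        congr 1
        rw [Finset.card_univ, ← Nat.card_eq_fintype_card]
    _ = (Nat.card (G ⧸ H) : ℝ) ^ 2 * ∑ i : Fin k, (n i : ℝ) * ((m i : ℝ) / (n i : ℝ)) ^ 2 := by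
        rw [Finset.mul_sum]
        refine Finset.sum_congr rfl fun i _ => ?_
        have hne : (n i : ℝ) ≠ 0 := Nat.cast_ne_zero.mpr (npos i).ne'
        field_simp
end

section
/- Let q be an odd prime power, let F_q be a finite field with q elements, and let n ≥ 1. Then the order of a Sylow 2-subgroup of the general linear group GL_n(F_q) (equivalently, the largest power of 2 dividing |GL_n(F_q)|) equals ((q − 1)_2)^{⌈n/2⌉} * ((q^2 − 1)_2)^{⌊n/2⌋} * (⌊n/2⌋!)_2. -/
/-!
A Sylow `2`-subgroup of `GL_n(F_q)` has order `2 ^ ν₂ |GL_n(F_q)|`, and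
`|GL_n(F_q)| = ∏_{i<n} (q^n - q^i) = q^(n(n-1)/2) ∏_{k=1}^n (q^k - 1)` with `q` odd.
Lifting the exponent gives `ν₂(q^k - 1) = ν₂(q - 1)` for odd `k` and
`ν₂(q^(2m) - 1) = ν₂(q^2 - 1) + ν₂(m)`; summing over `k ≤ n` yields
`⌈n/2⌉ ν₂(q - 1) + ⌊n/2⌋ ν₂(q^2 - 1) + ν₂(⌊n/2⌋!)`.
-/

/-- `twoPart m` is the largest power of `2` dividing `m`, i.e. `2 ^ ν₂(m)`. -/
def twoPart (m : ℕ) : ℕ := 2 ^ (m.factorization 2)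

namespace Nat

theorem factorization_pow_sub_one_of_not_dvd {p q k : ℕ} (hp : p.Prime) (hq : 1 < q)
    (hpq : p ∣ q - 1) (hk : ¬p ∣ k) :
    (q ^ k - 1).factorization p = (q - 1).factorization p := by
  have : Fact p.Prime := ⟨hp⟩
  have hk0 : k ≠ 0 := by rintro rfl; exact hk (dvd_zero p)
  have hqk : 1 < q ^ k := one_lt_pow hk0 hq
  have hdvd : (p : ℤ) ∣ q - 1 := by
    simpa [Nat.cast_sub hq.le] using Int.natCast_dvd_natCast.mpr hpq
  have hndvd : ¬(p : ℤ) ∣ q := fun h =>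
    hp.not_dvd_one (Int.natCast_dvd_natCast.mp (by simpa using _root_.dvd_sub h hdvd))
  rw [factorization_def _ hp, factorization_def _ hp, ← Nat.cast_inj (R := ℕ∞),
    padicValNat_eq_emultiplicity (by omega), padicValNat_eq_emultiplicity (by omega),
    ← Int.natCast_emultiplicity, ← Int.natCast_emultiplicity, Nat.cast_sub hqk.le,
    Nat.cast_sub hq.le]
  simpa using emultiplicity_pow_sub_pow_of_prime (Nat.prime_iff_prime_int.mp hp) (y := 1)
    hdvd hndvd (n := k) (by exact_mod_cast hk)

theorem factorization_two_pow_sub_one_of_odd {q k : ℕ} (hq : Odd q) (hq1 : 1 < q) (hk : Odd k) :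
    (q ^ k - 1).factorization 2 = (q - 1).factorization 2 :=
  factorization_pow_sub_one_of_not_dvd prime_two hq1 (Nat.Odd.sub_odd hq odd_one).two_dvd
    hk.not_two_dvd_nat

theorem factorization_two_pow_two_mul_sub_one {q m : ℕ} (hq : Odd q) (hq1 : 1 < q)
    (hm : m ≠ 0) :
    (q ^ (2 * m) - 1).factorization 2 = (q ^ 2 - 1).factorization 2 + m.factorization 2 := by
  have : Fact (2).Prime := ⟨prime_two⟩
  have h2q : ¬2 ∣ q := hq.not_two_dvd_nat
  -- LTE for the exponents `2m` and `2`; the common term `ν₂(q + 1) + ν₂(q - 1)` cancels.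
  have hpow := padicValNat.pow_two_sub_one hq1 h2q (by omega) (even_two_mul m)
  have hsq := padicValNat.pow_two_sub_one hq1 h2q two_ne_zero even_two
  rw [padicValNat.mul two_ne_zero hm, padicValNat_self] at hpow
  rw [padicValNat_self] at hsq
  simp only [factorization_def _ prime_two]
  omega

theorem sum_range_two_mul_factorization_two_pow_succ_sub_one {q : ℕ} (hq : Odd q) (hq1 : 1 < q)
    (m : ℕ) :
    ∑ k ∈ Finset.range (2 * m), (q ^ (k + 1) - 1).factorization 2 =
      m * (q - 1).factorization 2 + m * (q ^ 2 - 1).factorization 2 +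
        m.factorial.factorization 2 := by
  induction m with
  | zero => simp
  | succ m ih =>
    have hodd : (q ^ (2 * m + 1) - 1).factorization 2 = (q - 1).factorization 2 :=
      factorization_two_pow_sub_one_of_odd hq hq1 (odd_two_mul_add_one m)
    have heven : (q ^ (2 * m + 1 + 1) - 1).factorization 2 =
        (q ^ 2 - 1).factorization 2 + (m + 1).factorization 2 :=
      factorization_two_pow_two_mul_sub_one hq hq1 m.succ_ne_zero
    rw [show 2 * (m + 1) = 2 * m + 1 + 1 by ring, Finset.sum_range_succ, Finset.sum_range_succ,
      ih, hodd, heven, factorial_succ, factorization_mul m.succ_ne_zero (factorial_ne_zero m),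
      Finsupp.add_apply]
    ring

theorem sum_range_factorization_two_pow_succ_sub_one {q : ℕ} (hq : Odd q) (hq1 : 1 < q)
    (n : ℕ) :
    ∑ k ∈ Finset.range n, (q ^ (k + 1) - 1).factorization 2 =
      (q - 1).factorization 2 * ((n + 1) / 2) + (q ^ 2 - 1).factorization 2 * (n / 2) +
        (n / 2).factorial.factorization 2 := by
  obtain ⟨m, rfl | rfl⟩ := even_or_odd' n
  · rw [sum_range_two_mul_factorization_two_pow_succ_sub_one hq hq1,
      show (2 * m + 1) / 2 = m by omega, show 2 * m / 2 = m by omega]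
    ring
  · rw [Finset.sum_range_succ, sum_range_two_mul_factorization_two_pow_succ_sub_one hq hq1,
      factorization_two_pow_sub_one_of_odd hq hq1 (odd_two_mul_add_one m),
      show (2 * m + 1 + 1) / 2 = m + 1 by omega, show (2 * m + 1) / 2 = m by omega]
    ring

theorem factorization_prod_pow_sub_pow {p q n : ℕ} (hp : p.Prime) (hq : 1 < q) (hpq : ¬p ∣ q) :
    (∏ i : Fin n, (q ^ n - q ^ (i : ℕ))).factorization p =
      ∑ k ∈ Finset.range n, (q ^ (k + 1) - 1).factorization p := by
  have hterm (i : ℕ) (hi : i < n) :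
      (q ^ n - q ^ i).factorization p = (q ^ (n - i) - 1).factorization p := by
    have hsplit : q ^ n - q ^ i = q ^ i * (q ^ (n - i) - 1) := by
      rw [Nat.mul_sub_one, ← pow_add, Nat.add_sub_cancel' hi.le]
    have hpos : 1 < q ^ (n - i) := one_lt_pow (by omega) hq
    rw [hsplit, factorization_mul (by positivity) (by omega), Finsupp.add_apply,
      factorization_eq_zero_of_not_dvd (fun h => hpq (hp.dvd_of_dvd_pow h)), zero_add]
  rw [factorization_prod fun i _ => Nat.sub_ne_zero_of_lt (pow_lt_pow_right₀ hq i.2),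
    Finsupp.finsetSum_apply, Fin.sum_univ_eq_sum_range (fun i => (q ^ n - q ^ i).factorization p),
    ← Finset.sum_range_reflect]
  refine Finset.sum_congr rfl fun k hk => ?_
  rw [Finset.mem_range] at hk
  rw [hterm _ (by omega), show n - (n - 1 - k) = k + 1 by omega]

end Nat

theorem stmt5_general (q n : ℕ) (hqodd : Odd q)
    (F : Type*) [Field F] [Fintype F] (hF : Fintype.card F = q)
    (P : Sylow 2 (Matrix.GeneralLinearGroup (Fin n) F)) :
    Nat.card ↥(P : Subgroup (Matrix.GeneralLinearGroup (Fin n) F)) =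
      twoPart (q - 1) ^ ((n + 1) / 2) * twoPart (q ^ 2 - 1) ^ (n / 2) *
        twoPart (Nat.factorial (n / 2)) := by
  have hq1 : 1 < q := hF ▸ Fintype.one_lt_card
  rw [Sylow.card_eq_multiplicity P, Matrix.card_GL_field, hF,
    Nat.factorization_prod_pow_sub_pow Nat.prime_two hq1 hqodd.not_two_dvd_nat,
    Nat.sum_range_factorization_two_pow_succ_sub_one hqodd hq1]
  simp only [twoPart, pow_add, pow_mul]

/-- If `q` is an odd prime power and `F` is a field with `q` elements, then the order
of a Sylow `2`-subgroup of `GL_n(F)` equals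
`((q - 1)_2)^⌈n/2⌉ * ((q^2 - 1)_2)^⌊n/2⌋ * (⌊n/2⌋!)_2`. -/
theorem stmt5 (q n : ℕ) (hq : IsPrimePow q) (hqodd : Odd q) (hn : 1 ≤ n)
    (F : Type*) [Field F] [Fintype F] (hF : Fintype.card F = q)
    (P : Sylow 2 (Matrix.GeneralLinearGroup (Fin n) F)) :
    Nat.card ↥(P : Subgroup (Matrix.GeneralLinearGroup (Fin n) F)) =
      twoPart (q - 1) ^ ((n + 1) / 2) * twoPart (q ^ 2 - 1) ^ (n / 2) *
        twoPart (Nat.factorial (n / 2)) :=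
  stmt5_general q n hqodd F hF P
end

section
/- Let G be the symmetric group on 8 letters and let H be a Sylow 2-subgroup of G. Then there exist x, y ∈ G such that H ∩ xHx⁻¹ ∩ yHy⁻¹ is the trivial subgroup. -/
/-!
All Sylow 2-subgroups of `S₈` are conjugate, and conjugating by `g` carries a pair `x, y` that
works for `P` to the pair `gxg⁻¹, gyg⁻¹` for `gPg⁻¹`; so it suffices to treat one of them. We take
the stabilizer of the tower of block systems `{01|23|45|67} ≺ {0123|4567}`, the iterated wreath
product `C₂ ≀ C₂ ≀ C₂` of order `2⁷ = |S₈|₂`. An element of it is determined by its values at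
`0, 2, 4, 6`, and for `x` the 8-cycle `i ↦ i + 1` and `y = (5 6)` a finite check over these
`128` elements shows that only the identity also stabilizes the conjugate towers.
-/

open Equiv

section FiberStabilizer

variable {α β : Type*}

def PreservesFibers (p : α → β) (f : α → α) : Prop :=
  ∀ i j, p (f i) = p (f j) ↔ p i = p j

instance [Fintype α] [DecidableEq β] (p : α → β) (f : α → α) :
    Decidable (PreservesFibers p f) := by
  unfold PreservesFibers; infer_instance

def fiberStabilizer (p : α → β) : Subgroup (Perm α) where
  carrier := {σ | PreservesFibers p σ}
  one_mem' _ _ := Iff.rfl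
  mul_mem' hσ hτ i j := (hσ _ _).trans (hτ i j)
  inv_mem' {σ} hσ i j := by simpa using (hσ (σ⁻¹ i) (σ⁻¹ j)).symm

theorem map_conj_fiberStabilizer (p : α → β) (x : Perm α) :
    (fiberStabilizer p).map (MulAut.conj x).toMonoidHom = fiberStabilizer (p ∘ ⇑x⁻¹) := by
  ext σ
  rw [Subgroup.mem_map_equiv, MulAut.conj_symm_apply]
  refine ⟨fun h i j => ?_, fun h i j => ?_⟩
  · simpa [Perm.mul_apply] using h (x⁻¹ i) (x⁻¹ j)
  · simpa [Perm.mul_apply] using h (x i) (x j)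

end FiberStabilizer

theorem Subgroup.map_conj_map {G G' : Type*} [Group G] [Group G'] (K : Subgroup G) (φ : G ≃* G')
    (x : G) :
    (K.map (MulAut.conj x).toMonoidHom).map φ.toMonoidHom =
      (K.map φ.toMonoidHom).map (MulAut.conj (φ x)).toMonoidHom := by
  simp only [Subgroup.map_map]
  congr 1
  ext k
  simp

theorem Sylow.exists_inf_map_conj_inf_map_conj_eq_bot {G : Type*} [Group G] {p : ℕ}
    [Fact p.Prime] [Finite (Sylow p G)] (P Q : Sylow p G) (x y : G)
    (hP : (P : Subgroup G) ⊓ (P : Subgroup G).map (MulAut.conj x).toMonoidHom ⊓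
      (P : Subgroup G).map (MulAut.conj y).toMonoidHom = ⊥) :
    ∃ x y : G, (Q : Subgroup G) ⊓ (Q : Subgroup G).map (MulAut.conj x).toMonoidHom ⊓
      (Q : Subgroup G).map (MulAut.conj y).toMonoidHom = ⊥ := by
  obtain ⟨g, rfl⟩ := MulAction.exists_smul_eq G P Q
  have hinj : Function.Injective (MulAut.conj g).toMonoidHom := (MulAut.conj g).injective
  have hgP : ((g • P : Sylow p G) : Subgroup G) =
      (P : Subgroup G).map (MulAut.conj g).toMonoidHom := rfl
  refine ⟨MulAut.conj g x, MulAut.conj g y, ?_⟩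
  rw [hgP, ← Subgroup.map_conj_map, ← Subgroup.map_conj_map, ← Subgroup.map_inf_eq _ _ _ hinj,
    ← Subgroup.map_inf_eq _ _ _ hinj, hP, Subgroup.map_bot]

namespace SymmetricGroupEight

def pair (i : Fin 8) : ℕ := i.val / 2

def half (i : Fin 8) : ℕ := i.val / 4

def towerStabilizer : Subgroup (Perm (Fin 8)) :=
  fiberStabilizer pair ⊓ fiberStabilizer half

def partner : Fin 8 → Fin 8
  | 0 => 1 | 1 => 0 | 2 => 3 | 3 => 2 | 4 => 5 | 5 => 4 | 6 => 7 | 7 => 6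

def ofEvens (v : Fin 8 × Fin 8 × Fin 8 × Fin 8) : Fin 8 → Fin 8
  | 0 => v.1 | 1 => partner v.1 | 2 => v.2.1 | 3 => partner v.2.1
  | 4 => v.2.2.1 | 5 => partner v.2.2.1 | 6 => v.2.2.2 | 7 => partner v.2.2.2

theorem apply_partner {σ : Perm (Fin 8)} (hσ : σ ∈ fiberStabilizer pair) (i : Fin 8) :
    σ (partner i) = partner (σ i) := by
  have eq_partner : ∀ u v : Fin 8, pair u = pair v → u ≠ v → v = partner u := by decide
  refine eq_partner _ _ ((hσ i (partner i)).2 ?_) (σ.injective.ne ?_) <;> revert i <;> decide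

theorem ofEvens_apply_evens {σ : Perm (Fin 8)} (hσ : σ ∈ fiberStabilizer pair) :
    ofEvens (σ 0, σ 2, σ 4, σ 6) = σ := by
  funext i
  fin_cases i
  all_goals first | rfl | exact (apply_partner hσ _).symm

/- The possible values of `(σ 0, σ 2, σ 4, σ 6)` for `σ ∈ towerStabilizer`, written as a cheap
test so that the `decide`s below evaluate the expensive conditions on only `128` of the `8⁴`
tuples. -/
def IsAdmissible (v : Fin 8 × Fin 8 × Fin 8 × Fin 8) : Prop :=
  half v.1 = half v.2.1 ∧ pair v.1 ≠ pair v.2.1 ∧ half v.2.2.1 = half v.2.2.2 ∧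
    pair v.2.2.1 ≠ pair v.2.2.2 ∧ half v.1 ≠ half v.2.2.1

instance : DecidablePred IsAdmissible := fun _ => by unfold IsAdmissible; infer_instance

theorem isAdmissible_evens {σ : Perm (Fin 8)} (hσ : σ ∈ towerStabilizer) :
    IsAdmissible (σ 0, σ 2, σ 4, σ 6) := by
  obtain ⟨hpair, hhalf⟩ := Subgroup.mem_inf.1 hσ
  exact ⟨(hhalf 0 2).2 rfl, fun h => absurd ((hpair 0 2).1 h) (by decide), (hhalf 4 6).2 rfl,
    fun h => absurd ((hpair 4 6).1 h) (by decide), fun h => absurd ((hhalf 0 4).1 h) (by decide)⟩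

set_option maxRecDepth 100000 in
theorem card_admissible : Fintype.card {v // IsAdmissible v} = 2 ^ 7 := by decide +kernel

set_option maxRecDepth 100000 in
theorem ofEvens_of_isAdmissible : ∀ v, IsAdmissible v →
    Function.Injective (ofEvens v) ∧ PreservesFibers pair (ofEvens v) ∧
      PreservesFibers half (ofEvens v) := by
  decide +kernel

set_option maxRecDepth 100000 in
theorem ofEvens_eq_id : ∀ v, IsAdmissible v →
    PreservesFibers (pair ∘ ⇑(finRotate 8)⁻¹) (ofEvens v) →
    PreservesFibers (half ∘ ⇑(finRotate 8)⁻¹) (ofEvens v) →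
    PreservesFibers (pair ∘ ⇑(swap (5 : Fin 8) 6)⁻¹) (ofEvens v) →
    PreservesFibers (half ∘ ⇑(swap (5 : Fin 8) 6)⁻¹) (ofEvens v) →
    ∀ i, ofEvens v i = i := by
  decide +kernel

noncomputable def towerStabilizerEquivAdmissible : towerStabilizer ≃ {v // IsAdmissible v} where
  toFun σ := ⟨(σ.1 0, σ.1 2, σ.1 4, σ.1 6), isAdmissible_evens σ.2⟩
  invFun v :=
    ⟨Equiv.ofBijective (ofEvens v)
      (Finite.injective_iff_bijective.1 (ofEvens_of_isAdmissible v v.2).1),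
      Subgroup.mem_inf.2 (ofEvens_of_isAdmissible v v.2).2⟩
  left_inv σ := Subtype.ext <| Perm.ext <| congrFun <|
    ofEvens_apply_evens (Subgroup.mem_inf.1 σ.2).1
  right_inv _ := rfl

theorem card_towerStabilizer : Nat.card towerStabilizer = 2 ^ 7 := by
  rw [Nat.card_congr towerStabilizerEquivAdmissible, Nat.card_eq_fintype_card, card_admissible]

theorem factorization_card_perm_two : (Nat.card (Perm (Fin 8))).factorization 2 = 7 := by
  have legendre := sub_one_mul_padicValNat_factorial (p := 2) 8
  rw [Nat.card_perm, Nat.card_eq_fintype_card, Fintype.card_fin,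
    Nat.factorization_def _ Nat.prime_two]
  norm_num at legendre
  exact legendre

def towerSylow : Sylow 2 (Perm (Fin 8)) :=
  Sylow.ofCard towerStabilizer (by rw [card_towerStabilizer, factorization_card_perm_two])

theorem towerStabilizer_inf_map_conj_inf_map_conj_eq_bot :
    towerStabilizer ⊓ towerStabilizer.map (MulAut.conj (finRotate 8)).toMonoidHom ⊓
      towerStabilizer.map (MulAut.conj (swap (5 : Fin 8) 6)).toMonoidHom = ⊥ := by
  simp only [towerStabilizer,
    Subgroup.map_inf_eq _ _ (MulEquiv.toMonoidHom _) (MulEquiv.injective _),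
    map_conj_fiberStabilizer]
  refine eq_bot_iff.2 fun σ hσ => ?_
  simp only [Subgroup.mem_inf] at hσ
  obtain ⟨⟨⟨hpair, hhalf⟩, hpair₁, hhalf₁⟩, hpair₂, hhalf₂⟩ := hσ
  have hid := ofEvens_eq_id _ (isAdmissible_evens ⟨hpair, hhalf⟩)
  rw [ofEvens_apply_evens hpair] at hid
  exact Perm.ext (hid hpair₁ hhalf₁ hpair₂ hhalf₂)

end SymmetricGroupEight

/-- If `H` is a Sylow `2`-subgroup of the symmetric group `S₈`, then there exist
`x, y` with `H ∩ xHx⁻¹ ∩ yHy⁻¹ = 1`. -/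
theorem stmt9 (H : Sylow 2 (Equiv.Perm (Fin 8))) :
    ∃ x y : Equiv.Perm (Fin 8),
      (H : Subgroup (Equiv.Perm (Fin 8))) ⊓
        (H : Subgroup (Equiv.Perm (Fin 8))).map (MulAut.conj x).toMonoidHom ⊓
        (H : Subgroup (Equiv.Perm (Fin 8))).map (MulAut.conj y).toMonoidHom = ⊥ :=
  Sylow.exists_inf_map_conj_inf_map_conj_eq_bot SymmetricGroupEight.towerSylow H _ _
    SymmetricGroupEight.towerStabilizer_inf_map_conj_inf_map_conj_eq_bot
end

section
/- Let q be a prime power with q ≡ 1 (mod 4), let F_q be a finite field with q elements, and let n ≥ 1. Then the subgroup of GL_n(F_q) consisting of all monomial matrices (matrices with exactly one nonzero entry in every row and every column) contains a Sylow 2-subgroup of GL_n(F_q). -/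
/-- A square matrix is monomial if every row and every column contains exactly one
nonzero entry. -/
def IsMonomialMatrix {n : Type*} {F : Type*} [Zero F] (M : Matrix n n F) : Prop :=
  (∀ i, ∃! j, M i j ≠ 0) ∧ (∀ j, ∃! i, M i j ≠ 0)

open Matrix Finset

section Monomial

variable {n : ℕ} {F : Type*} [Field F]

private lemma row_mul_apply {A B : Matrix (Fin n) (Fin n) F} {i k : Fin n}
    (h : ∀ m, m ≠ k → A i m = 0) (j : Fin n) : (A * B) i j = A i k * B k j := by
  rw [Matrix.mul_apply]
  exact Finset.sum_eq_single k (fun m _ hm => by rw [h m hm, zero_mul])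
    (fun hk => absurd (Finset.mem_univ k) hk)

private lemma col_mul_apply {A B : Matrix (Fin n) (Fin n) F} {j k : Fin n}
    (h : ∀ m, m ≠ k → B m j = 0) (i : Fin n) : (A * B) i j = A i k * B k j := by
  rw [Matrix.mul_apply]
  exact Finset.sum_eq_single k (fun m _ hm => by rw [h m hm, mul_zero])
    (fun hk => absurd (Finset.mem_univ k) hk)

lemma IsMonomialMatrix.mul {A B : Matrix (Fin n) (Fin n) F}
    (hA : IsMonomialMatrix A) (hB : IsMonomialMatrix B) : IsMonomialMatrix (A * B) := by
  constructor
  · intro i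
    obtain ⟨k, hk, hk'⟩ := hA.1 i
    obtain ⟨j, hj, hj'⟩ := hB.1 k
    have hrow : ∀ m, m ≠ k → A i m = 0 := fun m hm => by
      by_contra h; exact hm (hk' m h)
    refine ⟨j, ?_, ?_⟩
    · show (A * B) i j ≠ 0
      rw [row_mul_apply hrow]; exact mul_ne_zero hk hj
    · intro y hy
      rw [row_mul_apply hrow] at hy
      exact hj' y (right_ne_zero_of_mul hy)
  · intro j
    obtain ⟨k, hk, hk'⟩ := hB.2 j
    obtain ⟨i, hi, hi'⟩ := hA.2 k
    have hcol : ∀ m, m ≠ k → B m j = 0 := fun m hm => by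
      by_contra h; exact hm (hk' m h)
    refine ⟨i, ?_, ?_⟩
    · show (A * B) i j ≠ 0
      rw [col_mul_apply hcol]; exact mul_ne_zero hi hk
    · intro y hy
      rw [col_mul_apply hcol] at hy
      exact hi' y (left_ne_zero_of_mul hy)

lemma IsMonomialMatrix.one : IsMonomialMatrix (1 : Matrix (Fin n) (Fin n) F) := by
  constructor
  · intro i
    refine ⟨i, by simp [Matrix.one_apply], fun y hy => ?_⟩
    by_contra h
    exact hy (Matrix.one_apply_ne (Ne.symm h))
  · intro j
    refine ⟨j, by simp [Matrix.one_apply], fun y hy => ?_⟩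
    by_contra h
    exact hy (Matrix.one_apply_ne' (Ne.symm h))

/-- The subgroup of monomial matrices in `GL n F`. -/
def monSub (n : ℕ) (F : Type*) [Field F] [Finite F] : Subgroup (GL (Fin n) F) where
  carrier := {M | IsMonomialMatrix (M : Matrix (Fin n) (Fin n) F)}
  one_mem' := by simpa [Units.val_one] using (IsMonomialMatrix.one (n := n) (F := F))
  mul_mem' := by
    intro a b ha hb
    simpa [Units.val_mul] using ha.mul hb
  inv_mem' := by
    intro x hx
    have hpow : ∀ k : ℕ, IsMonomialMatrix ((x ^ k : GL (Fin n) F) : Matrix (Fin n) (Fin n) F) := by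
      intro k
      induction k with
      | zero => simpa [Units.val_one] using (IsMonomialMatrix.one (n := n) (F := F))
      | succ k ih => rw [pow_succ, Units.val_mul]; exact ih.mul hx
    have h1 : x⁻¹ = x ^ (orderOf x - 1) := by
      apply inv_eq_of_mul_eq_one_right
      rw [← pow_succ']
      rw [Nat.sub_add_cancel (orderOf_pos x)]
      exact pow_orderOf_eq_one x
    rw [Set.mem_setOf_eq, h1]
    exact hpow _

lemma mem_monSub {F : Type*} [Field F] [Finite F] {x : GL (Fin n) F} :
    x ∈ monSub n F ↔ IsMonomialMatrix (x : Matrix (Fin n) (Fin n) F) := Iff.rfl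

end Monomial

section Card

variable {n : ℕ} {F : Type*} [Field F]

/-- The monomial matrix associated to a permutation and a vector of units. -/
private def monMat (σ : Equiv.Perm (Fin n)) (d : Fin n → Fˣ) : Matrix (Fin n) (Fin n) F :=
  Matrix.of fun i j => if σ i = j then (d i : F) else 0

private def monMatInv (σ : Equiv.Perm (Fin n)) (d : Fin n → Fˣ) : Matrix (Fin n) (Fin n) F :=
  Matrix.of fun i j => if σ j = i then (((d j)⁻¹ : Fˣ) : F) else 0

private lemma monMat_row (σ : Equiv.Perm (Fin n)) (d : Fin n → Fˣ) (i : Fin n) :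
    ∀ m, m ≠ σ i → monMat (F := F) σ d i m = 0 := by
  intro m hm
  exact if_neg (fun h => hm h.symm)

private lemma monMatInv_row (σ : Equiv.Perm (Fin n)) (d : Fin n → Fˣ) (j : Fin n) :
    ∀ m, m ≠ σ.symm j → monMatInv (F := F) σ d j m = 0 := by
  intro m hm
  refine if_neg (fun h => hm ?_)
  rw [← h, Equiv.symm_apply_apply]

private lemma monMat_mul_inv (σ : Equiv.Perm (Fin n)) (d : Fin n → Fˣ) :
    monMat (F := F) σ d * monMatInv σ d = 1 := by
  ext i i'
  rw [row_mul_apply (monMat_row σ d i)]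
  show (if σ i = σ i then (d i : F) else 0) * (if σ i' = σ i then (((d i')⁻¹ : Fˣ) : F) else 0)
      = (1 : Matrix (Fin n) (Fin n) F) i i'
  rw [if_pos rfl]
  by_cases h : i = i'
  · subst h
    rw [if_pos rfl, Matrix.one_apply_eq, Units.mul_inv]
  · rw [if_neg (fun hc => h (σ.injective hc).symm), mul_zero, Matrix.one_apply_ne h]

private lemma monMat_inv_mul (σ : Equiv.Perm (Fin n)) (d : Fin n → Fˣ) :
    monMatInv (F := F) σ d * monMat σ d = 1 := by
  ext j j'
  rw [row_mul_apply (monMatInv_row σ d j)]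
  show (if σ (σ.symm j) = j then (((d (σ.symm j))⁻¹ : Fˣ) : F) else 0)
      * (if σ (σ.symm j) = j' then (d (σ.symm j) : F) else 0)
      = (1 : Matrix (Fin n) (Fin n) F) j j'
  rw [if_pos (σ.apply_symm_apply j), σ.apply_symm_apply]
  by_cases h : j = j'
  · subst h
    rw [if_pos rfl, Matrix.one_apply_eq, Units.inv_mul]
  · rw [if_neg h, mul_zero, Matrix.one_apply_ne h]

/-- The unit of `GL n F` associated to a permutation and a vector of units. -/
private def monUnit (σ : Equiv.Perm (Fin n)) (d : Fin n → Fˣ) : GL (Fin n) F :=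
  ⟨monMat σ d, monMatInv σ d, monMat_mul_inv σ d, monMat_inv_mul σ d⟩

private lemma monMat_isMonomial (σ : Equiv.Perm (Fin n)) (d : Fin n → Fˣ) :
    IsMonomialMatrix (monMat (F := F) σ d) := by
  constructor
  · intro i
    refine ⟨σ i, ?_, fun y hy => ?_⟩
    · show (if σ i = σ i then (d i : F) else 0) ≠ 0
      rw [if_pos rfl]; exact (d i).ne_zero
    · by_contra h
      exact hy (monMat_row σ d i y (fun hc => h hc))
  · intro j
    refine ⟨σ.symm j, ?_, fun y hy => ?_⟩
    · show (if σ (σ.symm j) = j then (d (σ.symm j) : F) else 0) ≠ 0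
      rw [if_pos (σ.apply_symm_apply j)]; exact (d (σ.symm j)).ne_zero
    · show y = σ.symm j
      have : σ y = j := by
        by_contra h
        exact hy (if_neg h)
      rw [← this, Equiv.symm_apply_apply]

end Card

section Card2

variable {n : ℕ} {F : Type*} [Field F] [Fintype F]

private lemma card_monSub :
    Nat.card (monSub n F) = (Fintype.card F - 1) ^ n * n.factorial := by
  classical
  have hg : Function.Bijective
      (fun p : Equiv.Perm (Fin n) × (Fin n → Fˣ) =>
        (⟨monUnit p.1 p.2, monMat_isMonomial p.1 p.2⟩ : monSub n F)) := by
    constructor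
    · rintro ⟨σ, d⟩ ⟨σ', d'⟩ hp
      have hval : monMat (F := F) σ d = monMat σ' d' := by
        have := congrArg (fun z : monSub n F => ((z : GL (Fin n) F) : Matrix (Fin n) (Fin n) F)) hp
        exact this
      have hkey : ∀ i, σ i = σ' i ∧ d i = d' i := by
        intro i
        have h1 : monMat (F := F) σ d i (σ i) = monMat σ' d' i (σ i) := by rw [hval]
        have h2 : (d i : F) = if σ' i = σ i then (d' i : F) else 0 := by
          simpa [monMat] using h1
        by_cases h : σ' i = σ i
        · rw [if_pos h] at h2
          exact ⟨h.symm, Units.ext h2⟩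
        · rw [if_neg h] at h2
          exact absurd h2 (d i).ne_zero
      refine Prod.ext (Equiv.ext fun i => (hkey i).1) (funext fun i => (hkey i).2)
    · rintro ⟨M, hM⟩
      have hMm : IsMonomialMatrix ((M : Matrix (Fin n) (Fin n) F)) := hM
      let f : Fin n → Fin n := fun i => (hMm.1 i).exists.choose
      have hf : ∀ i, (M : Matrix (Fin n) (Fin n) F) i (f i) ≠ 0 :=
        fun i => (hMm.1 i).exists.choose_spec
      have hfu : ∀ i y, (M : Matrix (Fin n) (Fin n) F) i y ≠ 0 → y = f i := by
        intro i y hy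
        obtain ⟨j, hj, hj'⟩ := hMm.1 i
        rw [hj' y hy, hj' (f i) (hf i)]
      have hinj : Function.Injective f := by
        intro i i' h
        obtain ⟨k, hk, hk'⟩ := hMm.2 (f i)
        exact (hk' i (hf i)).trans (hk' i' (by rw [h]; exact hf i')).symm
      have hbij : Function.Bijective f := (Finite.injective_iff_bijective).mp hinj
      refine ⟨⟨Equiv.ofBijective f hbij, fun i => Units.mk0 _ (hf i)⟩, ?_⟩
      apply Subtype.ext
      apply Units.ext
      show monMat _ _ = (M : Matrix (Fin n) (Fin n) F)
      ext i j
      show (if f i = j then ((Units.mk0 _ (hf i) : Fˣ) : F) else 0)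
          = (M : Matrix (Fin n) (Fin n) F) i j
      by_cases h : f i = j
      · subst h; rw [if_pos rfl]; rfl
      · rw [if_neg h]
        by_contra hc
        exact h ((hfu i j (fun hz => hc hz.symm)).symm)
  rw [← Nat.card_congr (Equiv.ofBijective _ hg), Nat.card_prod, Nat.card_eq_fintype_card,
    Nat.card_eq_fintype_card, Fintype.card_perm, Fintype.card_fin, Fintype.card_fun,
    Fintype.card_fin, Fintype.card_units, mul_comm]

end Card2

section Arith

private lemma key_lte {x : ℕ} (hx4 : x % 4 = 1) (hx1 : 2 ≤ x) {j : ℕ} (hj : j ≠ 0) :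
    padicValNat 2 (x ^ j - 1) = padicValNat 2 (x - 1) + padicValNat 2 j := by
  have h1 : (1:ℕ) ≤ x ^ j := Nat.one_le_pow _ _ (by omega)
  have h2 : (2:ℕ) ≤ x ^ j := le_trans hx1 (Nat.le_self_pow hj x)
  have e1 : ((x ^ j - 1 : ℕ) : ℤ) = (x:ℤ) ^ j - 1 ^ j := by push_cast [h1]; ring
  have e2 : ((x - 1 : ℕ) : ℤ) = (x:ℤ) - 1 := by push_cast [show 1 ≤ x by omega]; ring
  have h := Int.two_pow_sub_pow' (x := (x:ℤ)) (y := 1) j (by omega) (by omega)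
  rw [← e1, ← e2] at h
  rw [show (2:ℤ) = ((2:ℕ):ℤ) from rfl] at h
  rw [Int.natCast_emultiplicity, Int.natCast_emultiplicity, Int.natCast_emultiplicity] at h
  rw [← padicValNat_eq_emultiplicity (by omega), ← padicValNat_eq_emultiplicity (by omega),
    ← padicValNat_eq_emultiplicity (by omega)] at h
  exact_mod_cast h

private lemma val_prod_eq (q n : ℕ) (hq2 : 2 ≤ q) (hq4 : q % 4 = 1) :
    (∏ i : Fin n, (q ^ n - q ^ (i : ℕ))).factorization 2
      = ((q - 1) ^ n * n.factorial).factorization 2 := by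
  have hq0 : q ≠ 0 := by omega
  have hqodd : ¬ 2 ∣ q := by omega
  have hq1 : q - 1 ≠ 0 := by omega
  have hqf0 : q.factorization 2 = 0 := Nat.factorization_eq_zero_of_not_dvd hqodd
  have hfac : ∀ i : Fin n, q ^ n - q ^ (i : ℕ) = q ^ (i : ℕ) * (q ^ (n - (i : ℕ)) - 1) := by
    intro i
    have hin : (i : ℕ) + (n - (i : ℕ)) = n := by omega
    calc q ^ n - q ^ (i : ℕ)
        = q ^ (i : ℕ) * q ^ (n - (i : ℕ)) - q ^ (i : ℕ) * 1 := by
          rw [← pow_add, hin, mul_one]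
      _ = q ^ (i : ℕ) * (q ^ (n - (i : ℕ)) - 1) := by rw [Nat.mul_sub]
  have hne : ∀ i : Fin n, q ^ (n - (i : ℕ)) - 1 ≠ 0 := by
    intro i
    have : 2 ≤ q ^ (n - (i : ℕ)) := le_trans hq2 (Nat.le_self_pow (by omega) q)
    omega
  have hterm : ∀ i : Fin n,
      ((q ^ (i : ℕ) * (q ^ (n - (i : ℕ)) - 1)).factorization) 2
        = (q - 1).factorization 2 + (n - (i : ℕ)).factorization 2 := by
    intro i
    rw [Nat.factorization_mul (pow_ne_zero _ hq0) (hne i), Finsupp.add_apply,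
      Nat.factorization_pow, Finsupp.smul_apply, hqf0, smul_zero, zero_add,
      Nat.factorization_def _ Nat.prime_two, Nat.factorization_def _ Nat.prime_two,
      Nat.factorization_def _ Nat.prime_two]
    exact key_lte hq4 hq2 (by omega)
  calc (∏ i : Fin n, (q ^ n - q ^ (i : ℕ))).factorization 2
      = (∏ i : Fin n, q ^ (i : ℕ) * (q ^ (n - (i : ℕ)) - 1)).factorization 2 := by
        rw [Finset.prod_congr rfl (fun i _ => hfac i)]
    _ = ∑ i : Fin n, ((q ^ (i : ℕ) * (q ^ (n - (i : ℕ)) - 1)).factorization) 2 := by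
        rw [Nat.factorization_prod (fun i _ => mul_ne_zero (pow_ne_zero _ hq0) (hne i)),
          Finset.sum_apply']
    _ = ∑ i : Fin n, ((q - 1).factorization 2 + (n - (i : ℕ)).factorization 2) := by
        exact Finset.sum_congr rfl (fun i _ => hterm i)
    _ = n * (q - 1).factorization 2 + ∑ i ∈ Finset.range n, (n - i).factorization 2 := by
        rw [Finset.sum_add_distrib, Finset.sum_const, Finset.card_univ, Fintype.card_fin,
          smul_eq_mul, Fin.sum_univ_eq_sum_range (fun i => (n - i).factorization 2)]
    _ = n * (q - 1).factorization 2 + ∑ i ∈ Finset.range n, ((i + 1).factorization) 2 := by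
        congr 1
        rw [← Finset.sum_range_reflect (fun i => ((i + 1).factorization) 2) n]
        refine Finset.sum_congr rfl (fun i hi => ?_)
        have h3 := Finset.mem_range.mp hi
        have h4 : n - i = n - 1 - i + 1 := by omega
        rw [h4]
    _ = n * (q - 1).factorization 2 + (n.factorial).factorization 2 := by
        congr 1
        rw [← Finset.prod_range_add_one_eq_factorial,
          Nat.factorization_prod (fun _ _ => Nat.succ_ne_zero _), Finset.sum_apply']
    _ = ((q - 1) ^ n * n.factorial).factorization 2 := by
        rw [Nat.factorization_mul (pow_ne_zero _ hq1) n.factorial_ne_zero, Finsupp.add_apply,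
          Nat.factorization_pow, Finsupp.smul_apply, smul_eq_mul]

end Arith

/-- Let `q ≡ 1 (mod 4)` be a prime power and `F` a field with `q` elements. Then the
subgroup of monomial matrices of `GL_n(F)` contains a Sylow `2`-subgroup of
`GL_n(F)`, i.e. some Sylow `2`-subgroup consists of monomial matrices. -/
theorem stmt18 (q n : ℕ) (hq : IsPrimePow q) (hq4 : q % 4 = 1) (hn : 1 ≤ n)
    (F : Type*) [Field F] [Fintype F] (hF : Fintype.card F = q) :
    ∃ P : Sylow 2 (Matrix.GeneralLinearGroup (Fin n) F),
      ∀ x : Matrix.GeneralLinearGroup (Fin n) F,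
        x ∈ (P : Subgroup (Matrix.GeneralLinearGroup (Fin n) F)) →
          IsMonomialMatrix (x : Matrix (Fin n) (Fin n) F) := by
  classical
  have hq2 : 2 ≤ q := hq.two_le
  set S := monSub n F with hS
  obtain ⟨Q⟩ : Nonempty (Sylow 2 S) := inferInstance
  have hcardG : Nat.card (GL (Fin n) F) = ∏ i : Fin n, (q ^ n - q ^ (i : ℕ)) := by
    rw [Matrix.card_GL_field, hF]
  have hkey : (Nat.card S).factorization 2 = (Nat.card (GL (Fin n) F)).factorization 2 := by
    rw [hcardG, card_monSub, hF, val_prod_eq q n hq2 hq4]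
  have hQcard : Nat.card (Q : Subgroup S) = 2 ^ (Nat.card (GL (Fin n) F)).factorization 2 := by
    rw [Q.card_eq_multiplicity, hkey]
  have hmap : Nat.card ((Q : Subgroup S).map S.subtype)
      = 2 ^ (Nat.card (GL (Fin n) F)).factorization 2 := by
    rw [← hQcard]
    exact (Nat.card_congr (Subgroup.equivMapOfInjective (Q : Subgroup S) S.subtype
      S.subtype_injective).toEquiv).symm
  refine ⟨Sylow.ofCard _ hmap, ?_⟩
  intro x hx
  rw [Sylow.coe_ofCard] at hx
  obtain ⟨y, hy, rfl⟩ := hx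
  exact y.2
end
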